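/- Let n ≥ 1, let μ0, μ1 ∈ ℝⁿ, let Σ0, Σ1 be symmetric positive definite real n×n matrices, and define A = Σ0^{−1/2}(Σ0^{1/2} Σ1 Σ0^{1/2})^{1/2} Σ0^{−1/2} and the affine map T(ξ) = μ1 + A(ξ − μ0). Then for every ξ ∈ ℝⁿ the Gaussian mass-conservation identity holds: φ(ξ; μ0, Σ0) = φ(T(ξ); μ1, Σ1) · det A; i.e., T transports the Gaussian density with parameters (μ0, Σ0) onto the Gaussian density with parameters (μ1, Σ1). -/

import Mathlib

/-!
An affine map `ξ ↦ μ₁ + A (ξ - μ₀)` with `det A > 0` transports the Gaussian with covariance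
`Σ₀` onto the Gaussian with covariance `A Σ₀ Aᵀ`: the quadratic form pulls back because
`Aᵀ (A Σ₀ Aᵀ)⁻¹ A = Σ₀⁻¹`, and the normalising constants differ by the Jacobian `det A` because
`det (A Σ₀ Aᵀ) = det Σ₀ · (det A)²`. The matrix
`A = Σ₀^{-1/2} (Σ₀^{1/2} Σ₁ Σ₀^{1/2})^{1/2} Σ₀^{-1/2}` is symmetric with positive determinant
and solves `A Σ₀ A = Σ₁`, so `A Σ₀ Aᵀ = Σ₁`.
-/

open Matrix

/-- Gaussian density on `ℝⁿ`:
`φ(x; μ, Σ) = (2π)^{-n/2} (det Σ)^{-1/2} exp(-(1/2)(x-μ)ᵀ Σ⁻¹ (x-μ))`. -/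
noncomputable def gaussianDensity (n : ℕ) (μ : Fin n → ℝ) (Sigma : Matrix (Fin n) (Fin n) ℝ)
    (x : Fin n → ℝ) : ℝ :=
  (2 * Real.pi) ^ (-(n : ℝ) / 2) * Sigma.det ^ (-(1 : ℝ) / 2) *
    Real.exp (-(1 / 2) * ((x - μ) ⬝ᵥ Sigma⁻¹ *ᵥ (x - μ)))

/-- At `a = 0` both sides vanish, since `0 ^ x = 0` for `x ≠ 0`. -/
lemma Real.mul_sq_rpow_neg_half_mul {a d : ℝ} (ha : 0 ≤ a) (hd : 0 < d) :
    (a * d ^ 2) ^ (-(1 : ℝ) / 2) * d = a ^ (-(1 : ℝ) / 2) := by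
  rw [Real.mul_rpow ha (by positivity), ← Real.rpow_natCast d 2, ← Real.rpow_mul hd.le]
  norm_num [Real.rpow_neg_one, hd.ne']

namespace Matrix

variable {ι : Type*}

lemma PosSemidef.transpose_eq {S : Matrix ι ι ℝ} (hS : S.PosSemidef) : Sᵀ = S :=
  (isHermitian_iff_isSymm.mp hS.isHermitian).eq

lemma mulVec_dotProduct_mulVec_mulVec [Fintype ι] {R : Type*} [CommSemiring R]
    (B C : Matrix ι ι R) (v : ι → R) : (B *ᵥ v) ⬝ᵥ C *ᵥ (B *ᵥ v) = v ⬝ᵥ (Bᵀ * C * B) *ᵥ v := by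
  rw [mulVec_mulVec, dotProduct_mulVec, dotProduct_mulVec, ← transpose_transpose B,
    mulVec_transpose, vecMul_vecMul, transpose_transpose, Matrix.mul_assoc]

variable [Fintype ι] [DecidableEq ι]

lemma transpose_mul_inv_mul_mul_transpose_mul {R : Type*} [CommRing R] {A : Matrix ι ι R}
    (hA : IsUnit A.det) (B : Matrix ι ι R) : Aᵀ * (A * B * Aᵀ)⁻¹ * A = B⁻¹ := by
  have hAT : IsUnit Aᵀ.det := isUnit_det_transpose A hA
  rw [Matrix.mul_inv_rev, Matrix.mul_inv_rev]
  calc Aᵀ * (Aᵀ⁻¹ * (B⁻¹ * A⁻¹)) * A = Aᵀ * (Aᵀ⁻¹ * (B⁻¹ * (A⁻¹ * A))) := by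
        simp only [Matrix.mul_assoc]
    _ = B⁻¹ := by rw [nonsing_inv_mul _ hA, Matrix.mul_one, mul_nonsing_inv_cancel_left _ _ hAT]

lemma riccati_of_sq_eq {R : Type*} [CommRing R] {S M B : Matrix ι ι R} (hS : IsUnit S.det)
    (hM : M ^ 2 = S * B * S) : S⁻¹ * M * S⁻¹ * S ^ 2 * (S⁻¹ * M * S⁻¹) = B := by
  calc S⁻¹ * M * S⁻¹ * S ^ 2 * (S⁻¹ * M * S⁻¹)
      = S⁻¹ * (M * (S⁻¹ * (S * (S * (S⁻¹ * (M * S⁻¹)))))) := by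
        simp only [sq, Matrix.mul_assoc]
    _ = S⁻¹ * M ^ 2 * S⁻¹ := by
        rw [nonsing_inv_mul_cancel_left _ _ hS, mul_nonsing_inv_cancel_left _ _ hS]
        simp only [sq, Matrix.mul_assoc]
    _ = B := by
        rw [hM, Matrix.mul_assoc, Matrix.mul_assoc, mul_nonsing_inv _ hS, Matrix.mul_one,
          nonsing_inv_mul_cancel_left _ _ hS]

lemma PosSemidef.det_pos_of_sq_eq {S B : Matrix ι ι ℝ} (hS : S.PosSemidef) (hSB : S ^ 2 = B)
    (hB : 0 < B.det) : 0 < S.det := by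
  refine hS.det_nonneg.lt_of_ne fun h ↦ hB.ne' ?_
  rw [← hSB, det_pow, ← h, zero_pow two_ne_zero]

end Matrix

lemma gaussianDensity_eq_affine_mul_det {n : ℕ} (μ0 μ1 : Fin n → ℝ)
    {Sigma0 A : Matrix (Fin n) (Fin n) ℝ} (hSigma0 : 0 ≤ Sigma0.det) (hA : 0 < A.det)
    (ξ : Fin n → ℝ) :
    gaussianDensity n μ0 Sigma0 ξ =
      gaussianDensity n μ1 (A * Sigma0 * Aᵀ) (μ1 + A *ᵥ (ξ - μ0)) * A.det := by
  have hquad : (μ1 + A *ᵥ (ξ - μ0) - μ1) ⬝ᵥ (A * Sigma0 * Aᵀ)⁻¹ *ᵥ (μ1 + A *ᵥ (ξ - μ0) - μ1) =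
      (ξ - μ0) ⬝ᵥ Sigma0⁻¹ *ᵥ (ξ - μ0) := by
    rw [add_sub_cancel_left, mulVec_dotProduct_mulVec_mulVec,
      transpose_mul_inv_mul_mul_transpose_mul hA.ne'.isUnit]
  have hdet : (A * Sigma0 * Aᵀ).det = Sigma0.det * A.det ^ 2 := by
    rw [det_mul, det_mul, det_transpose]; ring
  unfold gaussianDensity
  rw [hquad, hdet, ← Real.mul_sq_rpow_neg_half_mul hSigma0 hA]
  ring

theorem gaussian_mass_conservation_general
    (n : ℕ) (μ0 μ1 : Fin n → ℝ)
    (Sigma0 Sigma1 : Matrix (Fin n) (Fin n) ℝ) (hSigma0 : Sigma0.PosDef)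
    (hSigma1 : Sigma1.PosDef)
    (S0 : Matrix (Fin n) (Fin n) ℝ) (hS0 : S0.PosSemidef) (hS0sq : S0 ^ 2 = Sigma0)
    (M : Matrix (Fin n) (Fin n) ℝ) (hM : M.PosSemidef) (hMsq : M ^ 2 = S0 * Sigma1 * S0)
    (A : Matrix (Fin n) (Fin n) ℝ) (hA : A = S0⁻¹ * M * S0⁻¹)
    (T : (Fin n → ℝ) → (Fin n → ℝ)) (hT : ∀ ξ, T ξ = μ1 + A *ᵥ (ξ - μ0)) :
    ∀ ξ : Fin n → ℝ,
      gaussianDensity n μ0 Sigma0 ξ = gaussianDensity n μ1 Sigma1 (T ξ) * A.det := by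
  intro ξ
  have hS0det : 0 < S0.det := hS0.det_pos_of_sq_eq hS0sq hSigma0.det_pos
  have hMdet : 0 < M.det := hM.det_pos_of_sq_eq hMsq <| by
    have := hSigma1.det_pos
    rw [det_mul, det_mul]
    positivity
  have hAdet : 0 < A.det := by
    rw [hA, det_mul, det_mul, det_nonsing_inv, Ring.inverse_eq_inv']
    positivity
  have hAsymm : Aᵀ = A := by
    rw [hA, transpose_mul, transpose_mul, transpose_nonsing_inv, hS0.transpose_eq, hM.transpose_eq,
      Matrix.mul_assoc]
  have hSigma1_eq : Sigma1 = A * Sigma0 * Aᵀ := by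
    rw [hAsymm, ← hS0sq, hA, riccati_of_sq_eq hS0det.ne'.isUnit hMsq]
  rw [hT, hSigma1_eq]
  exact gaussianDensity_eq_affine_mul_det μ0 μ1 hSigma0.det_pos.le hAdet ξ

/-- with `A = Sigma0^{-1/2}(Sigma0^{1/2} Sigma1 Sigma0^{1/2})^{1/2} Sigma0^{-1/2}`
(square roots characterized as the unique symmetric positive semidefinite square roots) and the
affine map `T ξ = μ1 + A(ξ - μ0)`, the Gaussian mass-conservation identity
`φ(ξ; μ0, Sigma0) = φ(T ξ; μ1, Sigma1) · det A` holds for every `ξ ∈ ℝⁿ`. -/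
theorem gaussian_mass_conservation
    (n : ℕ) (hn : 1 ≤ n) (μ0 μ1 : Fin n → ℝ)
    (Sigma0 Sigma1 : Matrix (Fin n) (Fin n) ℝ) (hSigma0 : Sigma0.PosDef)
    (hSigma1 : Sigma1.PosDef)
    (S0 : Matrix (Fin n) (Fin n) ℝ) (hS0 : S0.PosSemidef) (hS0sq : S0 ^ 2 = Sigma0)
    (M : Matrix (Fin n) (Fin n) ℝ) (hM : M.PosSemidef) (hMsq : M ^ 2 = S0 * Sigma1 * S0)
    (A : Matrix (Fin n) (Fin n) ℝ) (hA : A = S0⁻¹ * M * S0⁻¹)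
    (T : (Fin n → ℝ) → (Fin n → ℝ)) (hT : ∀ ξ, T ξ = μ1 + A *ᵥ (ξ - μ0)) :
    ∀ ξ : Fin n → ℝ,
      gaussianDensity n μ0 Sigma0 ξ = gaussianDensity n μ1 Sigma1 (T ξ) * A.det :=
  gaussian_mass_conservation_general n μ0 μ1 Sigma0 Sigma1 hSigma0 hSigma1 S0 hS0 hS0sq M hM hMsq A
    hA T hT
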